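/- If X and X' are i.i.d. with distribution F, Y and Y' i.i.d. with distribution G, all four independent, and all have finite first moments, then the squared energy distance 2E‖X−Y‖ − E‖X−X'‖ − E‖Y−Y'‖ is nonnegative, and it equals 0 when F = G. -/

import Mathlib

/-!
For a standard Gaussian vector `Z`, `⟪v, Z⟫` is centred normal with standard deviation `‖v‖`, so
`E |⟪v, Z⟫| = c ‖v‖` with `c = E |N(0, 1)| > 0`; and `|x - y| = ∫ (1{x ≤ s} - 1{y ≤ s})² ds`.
Hence `c ‖a - b‖` is the squared `L²(γ ⊗ ds)` distance between the half-space indicators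
`(z, s) ↦ 1{⟪a, z⟫ ≤ s}` and `(z, s) ↦ 1{⟪b, z⟫ ≤ s}`.
For a kernel `ρ(a, b) = ∫ (f_t a - f_t b)² dν(t)` with bounded features, Fubini and independence turn `2 E ρ(X, Y) - E ρ(X, X') - E ρ(Y, Y')` into
`∫ 2 (E f_t(X) - E f_t(Y))² dν(t) ≥ 0`. When `X` and `Y` have the same law, independence makes the
three expectations integrals of `ρ` against one and the same product law.
-/

open MeasureTheory ProbabilityTheory Set Function
open scoped RealInnerProductSpace

noncomputable def energyGap {Ω E : Type*} [MeasurableSpace Ω] (μ : Measure Ω) (ρ : E → E → ℝ)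
    (X X' Y Y' : Ω → E) : ℝ :=
  2 * ∫ ω, ρ (X ω) (Y ω) ∂μ - ∫ ω, ρ (X ω) (X' ω) ∂μ - ∫ ω, ρ (Y ω) (Y' ω) ∂μ

lemma energyGap_const_mul {Ω E : Type*} [MeasurableSpace Ω] {μ : Measure Ω} {X X' Y Y' : Ω → E}
    (c : ℝ) (ρ : E → E → ℝ) :
    energyGap μ (fun a b => c * ρ a b) X X' Y Y' = c * energyGap μ ρ X X' Y Y' := by
  simp only [energyGap, integral_const_mul]
  ring

section EnergyGap

variable {Ω T E : Type*} [MeasurableSpace Ω] [MeasurableSpace T] [MeasurableSpace E]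
  {μ : Measure Ω} [IsProbabilityMeasure μ] {ν : Measure T} [SFinite ν] {f : T → E → ℝ}
  {ρ : E → E → ℝ} {X X' Y Y' : Ω → E}

lemma integral_sq_sub_comp_of_indepFun {u : E → ℝ} {C : ℝ} (hu : Measurable u)
    (hC : ∀ x, |u x| ≤ C) {A B : Ω → E} (hA : AEMeasurable A μ) (hB : AEMeasurable B μ)
    (hAB : IndepFun A B μ) :
    ∫ ω, (u (A ω) - u (B ω)) ^ 2 ∂μ =
      ∫ ω, u (A ω) ^ 2 ∂μ + ∫ ω, u (B ω) ^ 2 ∂μ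
        - 2 * ((∫ ω, u (A ω) ∂μ) * ∫ ω, u (B ω) ∂μ) := by
  have huA := (hu.comp_aemeasurable hA).aestronglyMeasurable
  have huB := (hu.comp_aemeasurable hB).aestronglyMeasurable
  have hCC : ∀ x y, |u x * u y| ≤ C * C := fun x y => by
    rw [abs_mul]; exact mul_le_mul (hC x) (hC y) (abs_nonneg _) ((abs_nonneg _).trans (hC x))
  have integrable_of_bdd : ∀ {g : Ω → ℝ}, AEStronglyMeasurable g μ → (∀ ω, |g ω| ≤ C * C) →
      Integrable g μ :=
    fun hg h => .of_bound hg _ (ae_of_all _ h)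
  have hAA : Integrable (fun ω => u (A ω) ^ 2) μ :=
    integrable_of_bdd (huA.pow 2) fun ω => by rw [sq]; exact hCC _ _
  have hBB : Integrable (fun ω => u (B ω) ^ 2) μ :=
    integrable_of_bdd (huB.pow 2) fun ω => by rw [sq]; exact hCC _ _
  have hAB' : Integrable (fun ω => 2 * (u (A ω) * u (B ω))) μ :=
    (integrable_of_bdd (huA.mul huB) fun ω => hCC _ _).const_mul 2
  have hmul : ∫ ω, u (A ω) * u (B ω) ∂μ = (∫ ω, u (A ω) ∂μ) * ∫ ω, u (B ω) ∂μ :=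
    (hAB.comp hu hu).integral_mul_eq_mul_integral huA huB
  calc ∫ ω, (u (A ω) - u (B ω)) ^ 2 ∂μ
      = ∫ ω, (u (A ω) ^ 2 + u (B ω) ^ 2 - 2 * (u (A ω) * u (B ω))) ∂μ := by
        congr 1; ext ω; ring
    _ = _ := by
        have hsum : Integrable (fun ω => u (A ω) ^ 2 + u (B ω) ^ 2) μ := hAA.add hBB
        rw [integral_sub hsum hAB', integral_add hAA hBB, integral_const_mul, hmul]

lemma energyGap_sq_sub_eq {u : E → ℝ} {C : ℝ} (hu : Measurable u) (hC : ∀ x, |u x| ≤ C)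
    (hXX' : IdentDistrib X X' μ μ) (hYY' : IdentDistrib Y Y' μ μ) (hiXY : IndepFun X Y μ)
    (hiXX' : IndepFun X X' μ) (hiYY' : IndepFun Y Y' μ) :
    energyGap μ (fun a b => (u a - u b) ^ 2) X X' Y Y' =
      2 * (∫ ω, u (X ω) ∂μ - ∫ ω, u (Y ω) ∂μ) ^ 2 := by
  have same_law : ∀ {A A' : Ω → E}, IdentDistrib A A' μ μ → ∀ {g : E → ℝ}, Measurable g →
      ∫ ω, g (A' ω) ∂μ = ∫ ω, g (A ω) ∂μ := fun h _ hg => (h.comp hg).integral_eq.symm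
  have hX := hXX'.aemeasurable_fst
  have hY := hYY'.aemeasurable_fst
  rw [energyGap, integral_sq_sub_comp_of_indepFun hu hC hX hY hiXY,
    integral_sq_sub_comp_of_indepFun hu hC hX hXX'.aemeasurable_snd hiXX',
    integral_sq_sub_comp_of_indepFun hu hC hY hYY'.aemeasurable_snd hiYY',
    same_law hXX' hu, same_law hXX' (hu.pow_const 2), same_law hYY' hu,
    same_law hYY' (hu.pow_const 2)]
  ring

lemma integrable_prod_sq_sub (hf : Measurable (uncurry f))
    (hfi : ∀ a b, Integrable (fun t => (f t a - f t b) ^ 2) ν) {A B : Ω → E}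
    (hA : AEMeasurable A μ) (hB : AEMeasurable B μ)
    (hAB : Integrable (fun ω => ∫ t, (f t (A ω) - f t (B ω)) ^ 2 ∂ν) μ) :
    Integrable (uncurry fun t ω => (f t (A ω) - f t (B ω)) ^ 2) (ν.prod μ) := by
  have hmeas : AEMeasurable (fun p : T × Ω => (f p.1 (A p.2) - f p.1 (B p.2)) ^ 2) (ν.prod μ) :=
    ((hf.comp_aemeasurable (measurable_fst.aemeasurable.prodMk hA.comp_snd)).sub
      (hf.comp_aemeasurable (measurable_fst.aemeasurable.prodMk hB.comp_snd))).pow_const 2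
  refine (integrable_prod_iff' hmeas.aestronglyMeasurable).2
    ⟨ae_of_all _ fun ω => hfi (A ω) (B ω), hAB.congr (ae_of_all _ fun ω => ?_)⟩
  simp only [Real.norm_eq_abs, abs_sq]

lemma energyGap_eq_integral_energyGap_sq_sub (hf : Measurable (uncurry f))
    (hfi : ∀ a b, Integrable (fun t => (f t a - f t b) ^ 2) ν)
    (hρ : ∀ a b, ρ a b = ∫ t, (f t a - f t b) ^ 2 ∂ν)
    (hX : AEMeasurable X μ) (hX' : AEMeasurable X' μ) (hY : AEMeasurable Y μ)
    (hY' : AEMeasurable Y' μ) (hρXY : Integrable (fun ω => ρ (X ω) (Y ω)) μ)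
    (hρXX' : Integrable (fun ω => ρ (X ω) (X' ω)) μ)
    (hρYY' : Integrable (fun ω => ρ (Y ω) (Y' ω)) μ) :
    energyGap μ ρ X X' Y Y' =
      ∫ t, energyGap μ (fun a b => (f t a - f t b) ^ 2) X X' Y Y' ∂ν := by
  simp only [hρ] at hρXY hρXX' hρYY'
  have pXY := integrable_prod_sq_sub hf hfi hX hY hρXY
  have pXX' := integrable_prod_sq_sub hf hfi hX hX' hρXX'
  have pYY' := integrable_prod_sq_sub hf hfi hY hY' hρYY'
  have iXY : Integrable (fun t => 2 * ∫ ω, (f t (X ω) - f t (Y ω)) ^ 2 ∂μ) ν :=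
    pXY.integral_prod_left.const_mul 2
  have iXX' : Integrable (fun t => ∫ ω, (f t (X ω) - f t (X' ω)) ^ 2 ∂μ) ν :=
    pXX'.integral_prod_left
  have iYY' : Integrable (fun t => ∫ ω, (f t (Y ω) - f t (Y' ω)) ^ 2 ∂μ) ν :=
    pYY'.integral_prod_left
  have iXYXX' : Integrable (fun t => 2 * ∫ ω, (f t (X ω) - f t (Y ω)) ^ 2 ∂μ
      - ∫ ω, (f t (X ω) - f t (X' ω)) ^ 2 ∂μ) ν := iXY.sub iXX'
  simp only [energyGap, hρ]
  rw [integral_sub iXYXX' iYY', integral_sub iXY iXX', integral_const_mul,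
    integral_integral_swap pXY, integral_integral_swap pXX', integral_integral_swap pYY']

theorem energyGap_nonneg_of_eq_integral_sq_sub {C : ℝ}
    (hf : Measurable (uncurry f)) (hC : ∀ t x, |f t x| ≤ C)
    (hfi : ∀ a b, Integrable (fun t => (f t a - f t b) ^ 2) ν)
    (hρ : ∀ a b, ρ a b = ∫ t, (f t a - f t b) ^ 2 ∂ν)
    (hXX' : IdentDistrib X X' μ μ) (hYY' : IdentDistrib Y Y' μ μ) (hiXY : IndepFun X Y μ)
    (hiXX' : IndepFun X X' μ) (hiYY' : IndepFun Y Y' μ)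
    (hρXY : Integrable (fun ω => ρ (X ω) (Y ω)) μ)
    (hρXX' : Integrable (fun ω => ρ (X ω) (X' ω)) μ)
    (hρYY' : Integrable (fun ω => ρ (Y ω) (Y' ω)) μ) :
    0 ≤ energyGap μ ρ X X' Y Y' := by
  rw [energyGap_eq_integral_energyGap_sq_sub hf hfi hρ hXX'.aemeasurable_fst
    hXX'.aemeasurable_snd hYY'.aemeasurable_fst hYY'.aemeasurable_snd hρXY hρXX' hρYY']
  refine integral_nonneg fun t => ?_
  rw [energyGap_sq_sub_eq hf.of_uncurry_left (hC t) hXX' hYY' hiXY hiXX' hiYY']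
  positivity

lemma ProbabilityTheory.IndepFun.integral_comp_eq_integral_prod_map {A B : Ω → E}
    (hA : AEMeasurable A μ) (hB : AEMeasurable B μ) (hAB : IndepFun A B μ)
    (hρ : Measurable (uncurry ρ)) :
    ∫ ω, ρ (A ω) (B ω) ∂μ = ∫ p, ρ p.1 p.2 ∂(μ.map A).prod (μ.map B) := by
  rw [← hAB.map_prod_eq_prod_map_map hA hB]
  exact (integral_map (hA.prodMk hB) hρ.aestronglyMeasurable).symm

theorem energyGap_eq_zero_of_map_eq (hρ : Measurable (uncurry ρ))
    (hXX' : IdentDistrib X X' μ μ) (hYY' : IdentDistrib Y Y' μ μ) (hiXY : IndepFun X Y μ)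
    (hiXX' : IndepFun X X' μ) (hiYY' : IndepFun Y Y' μ) (h : μ.map X = μ.map Y) :
    energyGap μ ρ X X' Y Y' = 0 := by
  have hX := hXX'.aemeasurable_fst
  have hY := hYY'.aemeasurable_fst
  rw [energyGap, hiXY.integral_comp_eq_integral_prod_map hX hY hρ,
    hiXX'.integral_comp_eq_integral_prod_map hX hXX'.aemeasurable_snd hρ,
    hiYY'.integral_comp_eq_integral_prod_map hY hYY'.aemeasurable_snd hρ,
    ← hXX'.map_eq, ← hYY'.map_eq, h]
  ring

end EnergyGap

lemma sq_sub_indicator_Ici (x y s : ℝ) :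
    ((Ici x).indicator (1 : ℝ → ℝ) s - (Ici y).indicator 1 s) ^ 2 =
      (Ico (min x y) (max x y)).indicator 1 s := by
  rcases le_total x y with h | h <;>
  simp only [indicator, mem_Ici, mem_Ico, Pi.one_apply, min_eq_left, min_eq_right,
    max_eq_left, max_eq_right, h] <;>
  split_ifs <;> grind

lemma integrable_sq_sub_indicator_Ici (x y : ℝ) :
    Integrable (fun s => ((Ici x).indicator (1 : ℝ → ℝ) s - (Ici y).indicator 1 s) ^ 2) := by
  simp only [sq_sub_indicator_Ici]
  exact (integrable_indicator_iff measurableSet_Ico).2 (integrableOn_const measure_Ico_lt_top.ne)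

lemma integral_sq_sub_indicator_Ici (x y : ℝ) :
    ∫ s, ((Ici x).indicator (1 : ℝ → ℝ) s - (Ici y).indicator 1 s) ^ 2 = |x - y| := by
  simp only [sq_sub_indicator_Ici]
  rw [integral_indicator_one measurableSet_Ico, Real.volume_real_Ico,
    max_eq_left (sub_nonneg.2 min_le_max), max_sub_min_eq_abs, abs_sub_comm]

section Gaussian

variable {E : Type*} [NormedAddCommGroup E] [InnerProductSpace ℝ E]

noncomputable def halfspaceFeature (p : E × ℝ) (x : E) : ℝ := (Ici ⟪x, p.1⟫).indicator 1 p.2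

lemma abs_halfspaceFeature_le_one (p : E × ℝ) (x : E) : |halfspaceFeature p x| ≤ 1 := by
  simp only [halfspaceFeature, indicator]
  split_ifs <;> norm_num

variable [FiniteDimensional ℝ E] [MeasurableSpace E] [BorelSpace E]

lemma map_inner_stdGaussian (v : E) :
    (stdGaussian E).map (fun z => ⟪v, z⟫) = (gaussianReal 0 1).map (fun x => ‖v‖ * x) := by
  have h := IsGaussian.map_eq_gaussianReal (μ := stdGaussian E) (innerSL ℝ v)
  rw [integral_strongDual_stdGaussian, variance_dual_stdGaussian, innerSL_apply_norm] at h
  rw [gaussianReal_map_const_mul, mul_zero, show (fun z => ⟪v, z⟫) = innerSL ℝ v from rfl, h]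
  congr 1
  ext
  simp

lemma integrable_abs_inner_stdGaussian (v : E) :
    Integrable (fun z => |⟪v, z⟫|) (stdGaussian E) :=
  (IsGaussian.integrable_dual _ (innerSL ℝ v)).abs

lemma integral_abs_inner_stdGaussian (v : E) :
    ∫ z, |⟪v, z⟫| ∂stdGaussian E = (∫ x, |x| ∂gaussianReal 0 1) * ‖v‖ := by
  have hmap := map_inner_stdGaussian v
  rw [← integral_map (f := fun x : ℝ => |x|) (by fun_prop) (by fun_prop), hmap,
    integral_map (by fun_prop) (by fun_prop)]
  simp only [abs_mul, abs_norm]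
  rw [integral_const_mul, mul_comm]

lemma integral_abs_gaussianReal_pos : 0 < ∫ x, |x| ∂gaussianReal 0 1 := by
  have := nullSingletonClass_gaussianReal (μ := 0) one_ne_zero
  rw [integral_pos_iff_support_of_nonneg (fun x => abs_nonneg x)
    IsGaussian.integrable_id.abs, show support (fun x : ℝ => |x|) = {0}ᶜ by ext; simp,
    prob_compl_eq_one_sub (measurableSet_singleton 0), measure_singleton]
  simp

lemma measurable_halfspaceFeature : Measurable (uncurry (halfspaceFeature (E := E))) := by
  change Measurable ({q : (E × ℝ) × E | ⟪q.2, q.1.1⟫ ≤ q.1.2}.indicator 1)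
  exact measurable_const.indicator (measurableSet_le (by fun_prop) (by fun_prop))

lemma integrable_sq_sub_halfspaceFeature (a b : E) :
    Integrable (fun p => (halfspaceFeature p a - halfspaceFeature p b) ^ 2)
      ((stdGaussian E).prod volume) := by
  have hmeas : Measurable fun p => (halfspaceFeature p a - halfspaceFeature p b) ^ 2 :=
    (measurable_halfspaceFeature.of_uncurry_right.sub
      measurable_halfspaceFeature.of_uncurry_right).pow_const 2
  refine (integrable_prod_iff hmeas.aestronglyMeasurable).2
    ⟨ae_of_all _ fun z => integrable_sq_sub_indicator_Ici ⟪a, z⟫ ⟪b, z⟫,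
      (integrable_abs_inner_stdGaussian (a - b)).congr (ae_of_all _ fun z => ?_)⟩
  simp only [Real.norm_eq_abs, abs_sq, halfspaceFeature, integral_sq_sub_indicator_Ici,
    inner_sub_left]

lemma integral_sq_sub_halfspaceFeature (a b : E) :
    ∫ p, (halfspaceFeature p a - halfspaceFeature p b) ^ 2 ∂(stdGaussian E).prod volume =
      (∫ x, |x| ∂gaussianReal 0 1) * ‖a - b‖ := by
  rw [integral_prod _ (integrable_sq_sub_halfspaceFeature a b)]
  simp only [halfspaceFeature, integral_sq_sub_indicator_Ici, ← inner_sub_left]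
  exact integral_abs_inner_stdGaussian (a - b)

theorem energyGap_norm_sub_nonneg {Ω : Type*} [MeasurableSpace Ω] {μ : Measure Ω}
    [IsProbabilityMeasure μ] {X X' Y Y' : Ω → E} (hXX' : IdentDistrib X X' μ μ)
    (hYY' : IdentDistrib Y Y' μ μ) (hiXY : IndepFun X Y μ) (hiXX' : IndepFun X X' μ)
    (hiYY' : IndepFun Y Y' μ) (hX : Integrable X μ) (hY : Integrable Y μ) :
    0 ≤ energyGap μ (fun a b => ‖a - b‖) X X' Y Y' := by
  set c := ∫ x, |x| ∂gaussianReal 0 1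
  have hX' := hXX'.integrable_snd hX
  have hY' := hYY'.integrable_snd hY
  refine nonneg_of_mul_nonneg_right ?_ integral_abs_gaussianReal_pos
  rw [← energyGap_const_mul]
  exact energyGap_nonneg_of_eq_integral_sq_sub measurable_halfspaceFeature
    abs_halfspaceFeature_le_one integrable_sq_sub_halfspaceFeature
    (fun a b => (integral_sq_sub_halfspaceFeature a b).symm) hXX' hYY' hiXY hiXX' hiYY'
    ((hX.sub hY).norm.const_mul c) ((hX.sub hX').norm.const_mul c)
    ((hY.sub hY').norm.const_mul c)

end Gaussian

theorem energy_distance_nonneg_and_vanishes_general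
    {Ω : Type*} [MeasurableSpace Ω] (μ : Measure Ω) [IsProbabilityMeasure μ]
    (d : ℕ) (X X' Y Y' : Ω → EuclideanSpace ℝ (Fin d))
    (hXX' : IdentDistrib X X' μ μ) (hYY' : IdentDistrib Y Y' μ μ)
    (hindep : iIndepFun ![X, X', Y, Y'] μ)
    (hXint : Integrable (fun ω => ‖X ω‖) μ)
    (hYint : Integrable (fun ω => ‖Y ω‖) μ) :
    0 ≤ 2 * (∫ ω, ‖X ω - Y ω‖ ∂μ) - (∫ ω, ‖X ω - X' ω‖ ∂μ) - (∫ ω, ‖Y ω - Y' ω‖ ∂μ) ∧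
    (μ.map X = μ.map Y →
      2 * (∫ ω, ‖X ω - Y ω‖ ∂μ) - (∫ ω, ‖X ω - X' ω‖ ∂μ) - (∫ ω, ‖Y ω - Y' ω‖ ∂μ) = 0) := by
  have hiXY : IndepFun X Y μ := by simpa using hindep.indepFun (i := 0) (j := 2) (by decide)
  have hiXX' : IndepFun X X' μ := by simpa using hindep.indepFun (i := 0) (j := 1) (by decide)
  have hiYY' : IndepFun Y Y' μ := by simpa using hindep.indepFun (i := 2) (j := 3) (by decide)
  have hX : Integrable X μ :=
    (integrable_norm_iff hXX'.aemeasurable_fst.aestronglyMeasurable).1 hXint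
  have hY : Integrable Y μ :=
    (integrable_norm_iff hYY'.aemeasurable_fst.aestronglyMeasurable).1 hYint
  have hnorm : Measurable (uncurry fun a b : EuclideanSpace ℝ (Fin d) => ‖a - b‖) :=
    (measurable_fst.sub measurable_snd).norm
  exact ⟨energyGap_norm_sub_nonneg hXX' hYY' hiXY hiXX' hiYY' hX hY,
    energyGap_eq_zero_of_map_eq hnorm hXX' hYY' hiXY hiXX' hiYY'⟩

/-- If `X, X'` are i.i.d. with law `F`, `Y, Y'` i.i.d. with law `G`, all four independent
with finite first moments, then the squared energy distance
`2 E‖X - Y‖ - E‖X - X'‖ - E‖Y - Y'‖` is nonnegative, and it equals `0` when `F = G`. -/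
theorem energy_distance_nonneg_and_vanishes
    {Ω : Type*} [MeasurableSpace Ω] (μ : Measure Ω) [IsProbabilityMeasure μ]
    (d : ℕ) (X X' Y Y' : Ω → EuclideanSpace ℝ (Fin d))
    (hX : Measurable X) (hX' : Measurable X') (hY : Measurable Y) (hY' : Measurable Y')
    (hXX' : IdentDistrib X X' μ μ) (hYY' : IdentDistrib Y Y' μ μ)
    (hindep : iIndepFun ![X, X', Y, Y'] μ)
    (hXint : Integrable (fun ω => ‖X ω‖) μ) (hX'int : Integrable (fun ω => ‖X' ω‖) μ)
    (hYint : Integrable (fun ω => ‖Y ω‖) μ) (hY'int : Integrable (fun ω => ‖Y' ω‖) μ) :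
    0 ≤ 2 * (∫ ω, ‖X ω - Y ω‖ ∂μ) - (∫ ω, ‖X ω - X' ω‖ ∂μ) - (∫ ω, ‖Y ω - Y' ω‖ ∂μ) ∧
    (μ.map X = μ.map Y →
      2 * (∫ ω, ‖X ω - Y ω‖ ∂μ) - (∫ ω, ‖X ω - X' ω‖ ∂μ) - (∫ ω, ‖Y ω - Y' ω‖ ∂μ) = 0) :=
  energy_distance_nonneg_and_vanishes_general μ d X X' Y Y' hXX' hYY' hindep hXint hYint
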